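/- Let m, d be positive integers and let A, B ∈ ℝ^{m×d}. Then the orthogonal Procrustes value equals the squared Bures–Wasserstein distance between the associated covariance factors: min_{O ∈ O(d)} ‖A − BO‖_F² = d_BW(AAᵀ, BBᵀ)². -/

import Mathlib

open Matrix

/-- Squared Frobenius norm of a real matrix: `‖A‖_F² = tr(Aᵀ A)`. -/
noncomputable def frobSq {m n : Type*} [Fintype m] [Fintype n] (A : Matrix m n ℝ) : ℝ :=
  Matrix.trace (Aᵀ * A)

/-- `O ∈ O(d)`: a real orthogonal matrix. -/
def IsOrth {d : ℕ} (O : Matrix (Fin d) (Fin d) ℝ) : Prop :=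
  O * Oᵀ = 1 ∧ Oᵀ * O = 1

/-- `L ∈ 𝕃`: block-lower triangular w.r.t. `T` blocks of size `d`
(indices are pairs `(i, t)` with `i : Fin d` the within-block index and `t : Fin T`
the block index); the block `L_{t,s}` vanishes for `t < s`. -/
def BlockLT {d T : ℕ} (L : Matrix (Fin d × Fin T) (Fin d × Fin T) ℝ) : Prop :=
  ∀ p q : Fin d × Fin T, p.2 < q.2 → L p q = 0

/-- `O ∈ 𝕆`: block-diagonal with orthogonal `d × d` diagonal blocks. -/
def BlockOrth {d T : ℕ} (O : Matrix (Fin d × Fin T) (Fin d × Fin T) ℝ) : Prop :=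
  ∃ f : Fin T → Matrix (Fin d) (Fin d) ℝ, (∀ t, IsOrth (f t)) ∧ O = Matrix.blockDiagonal f

/-- Truncated `t`-th column `L̃_t ∈ ℝ^{(T−t)d×d}` (0-based `t`): the rows of the `t`-th block
column of `L` from block row `t` on. -/
def truncCol {d T : ℕ} (L : Matrix (Fin d × Fin T) (Fin d × Fin T) ℝ) (t : Fin T) :
    Matrix (Fin (T - t.val) × Fin d) (Fin d) ℝ :=
  fun p j => L (p.2, ⟨t.val + p.1.val, by have := p.1.isLt; omega⟩) (j, t)

/-- Column covariance `Σ̃_t^L = L̃_t L̃_tᵀ`. -/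
noncomputable def colCov {d T : ℕ} (L : Matrix (Fin d × Fin T) (Fin d × Fin T) ℝ) (t : Fin T) :
    Matrix (Fin (T - t.val) × Fin d) (Fin (T - t.val) × Fin d) ℝ :=
  truncCol L t * (truncCol L t)ᵀ

/-- The positive semidefinite square root of a PSD matrix (junk value `0` otherwise). -/
noncomputable def sqrtPSD {n : Type*} [Fintype n] [DecidableEq n] (P : Matrix n n ℝ) :
    Matrix n n ℝ :=
  by classical exact if h : P.PosSemidef then
    (h.1.eigenvectorUnitary : Matrix n n ℝ) *
      Matrix.diagonal ((↑) ∘ Real.sqrt ∘ h.1.eigenvalues) *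
      (star h.1.eigenvectorUnitary : Matrix n n ℝ) else 0

/-- The Bures–Wasserstein distance between (PSD) matrices. -/
noncomputable def dBW {n : Type*} [Fintype n] [DecidableEq n] (S1 S2 : Matrix n n ℝ) : ℝ :=
  Real.sqrt (Matrix.trace S1 + Matrix.trace S2 -
    2 * Matrix.trace (sqrtPSD (sqrtPSD S2 * S1 * sqrtPSD S2)))

open scoped MatrixOrder

private lemma conjT_real {m n : Type*} [Fintype m] [Fintype n] (A : Matrix m n ℝ) : Aᴴ = Aᵀ := by
  ext i j
  simp [conjTranspose_apply]

private lemma psd_tX_X {m n : Type*} [Fintype m] [Fintype n] (X : Matrix m n ℝ) :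
    (Xᵀ * X).PosSemidef := by
  have := posSemidef_conjTranspose_mul_self X
  rwa [conjT_real] at this

private lemma psd_X_tX {m n : Type*} [Fintype m] [Fintype n] (X : Matrix m n ℝ) :
    (X * Xᵀ).PosSemidef := by
  have := posSemidef_self_mul_conjTranspose X
  rwa [conjT_real] at this

private lemma sqrtPSD_of_psd {n : Type*} [Fintype n] [DecidableEq n] {P : Matrix n n ℝ}
    (h : P.PosSemidef) : sqrtPSD P = CFC.sqrt P := by
  unfold sqrtPSD
  rw [dif_pos h, CFC.sqrt_eq_real_sqrt P h.nonneg, cfcₙ_eq_cfc (hf0 := by simp), h.1.cfc_eq, IsHermitian.cfc,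
    Unitary.conjStarAlgAut_apply]
  rfl

private lemma frobSq_nonneg {m n : Type*} [Fintype m] [Fintype n] (A : Matrix m n ℝ) :
    0 ≤ frobSq A := by
  unfold frobSq Matrix.trace
  refine Finset.sum_nonneg fun j _ => ?_
  simp only [Matrix.diag_apply, Matrix.mul_apply, Matrix.transpose_apply]
  exact Finset.sum_nonneg fun i _ => mul_self_nonneg _

private lemma trace_sqrtPSD_eq_sum {n : Type*} [Fintype n] [DecidableEq n] {P : Matrix n n ℝ}
    (hP : P.PosSemidef) :
    (sqrtPSD P).trace = ∑ j, Real.sqrt (hP.1.eigenvalues j) := by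
  rw [sqrtPSD_of_psd hP]
  have : CFC.sqrt P = hP.1.eigenvectorUnitary.1 *
      Matrix.diagonal ((↑) ∘ Real.sqrt ∘ hP.1.eigenvalues) * star hP.1.eigenvectorUnitary.1 := by
    rw [← sqrtPSD_of_psd hP]; exact dif_pos hP
  rw [this, Matrix.trace_mul_comm, ← Matrix.mul_assoc, Unitary.coe_star_mul_self,
    Matrix.one_mul, Matrix.trace_diagonal]
  simp

private lemma dot_le_sqrt {k : ℕ} (v w : Fin k → ℝ) :
    v ⬝ᵥ w ≤ Real.sqrt (v ⬝ᵥ v) * Real.sqrt (w ⬝ᵥ w) := by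
  have h := Finset.sum_mul_sq_le_sq_mul_sq Finset.univ v w
  have h1 : v ⬝ᵥ w ≤ |v ⬝ᵥ w| := le_abs_self _
  have h2 : |v ⬝ᵥ w| = Real.sqrt ((v ⬝ᵥ w) ^ 2) := (Real.sqrt_sq_eq_abs _).symm
  have h3 : Real.sqrt ((v ⬝ᵥ w) ^ 2) ≤ Real.sqrt ((∑ i, v i ^ 2) * ∑ i, w i ^ 2) :=
    Real.sqrt_le_sqrt h
  have h4 : Real.sqrt ((∑ i, v i ^ 2) * ∑ i, w i ^ 2)
      = Real.sqrt (v ⬝ᵥ v) * Real.sqrt (w ⬝ᵥ w) := by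
    rw [Real.sqrt_mul (by positivity)]
    simp [dotProduct, sq]
  calc v ⬝ᵥ w ≤ |v ⬝ᵥ w| := h1
    _ = _ := h2
    _ ≤ _ := h3
    _ = _ := h4

private lemma IsOrth.transpose {d : ℕ} {O : Matrix (Fin d) (Fin d) ℝ} (h : IsOrth O) :
    IsOrth Oᵀ := ⟨by rw [transpose_transpose]; exact h.2, by rw [transpose_transpose]; exact h.1⟩

private lemma IsOrth.mul {d : ℕ} {O W : Matrix (Fin d) (Fin d) ℝ} (h1 : IsOrth O)
    (h2 : IsOrth W) : IsOrth (O * W) := by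
  constructor
  · rw [transpose_mul, Matrix.mul_assoc, ← Matrix.mul_assoc W, h2.1, Matrix.one_mul, h1.1]
  · rw [transpose_mul, Matrix.mul_assoc, ← Matrix.mul_assoc Oᵀ, h1.2, Matrix.one_mul, h2.2]

/-- the dot products of images of eigenvectors -/
private lemma dot_XmulVec {m d : ℕ} (X : Matrix (Fin m) (Fin d) ℝ) (j k : Fin d) :
    (X *ᵥ (WithLp.equiv 2 (Fin d → ℝ) ((psd_tX_X X).1.eigenvectorBasis j)))
      ⬝ᵥ (X *ᵥ (WithLp.equiv 2 (Fin d → ℝ) ((psd_tX_X X).1.eigenvectorBasis k)))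
    = if j = k then (psd_tX_X X).1.eigenvalues k else 0 := by
  set hG := psd_tX_X X
  set u : Fin d → Fin d → ℝ := fun j => WithLp.equiv 2 (Fin d → ℝ) (hG.1.eigenvectorBasis j)
    with hu
  have step1 : (X *ᵥ u j) ⬝ᵥ (X *ᵥ u k) = u j ⬝ᵥ ((Xᵀ * X) *ᵥ u k) := by
    rw [← Matrix.vecMul_transpose, dotProduct_mulVec, Matrix.vecMul_vecMul,
      ← dotProduct_mulVec]
  have step2 : (Xᵀ * X) *ᵥ u k = hG.1.eigenvalues k • u k := by
    have := hG.1.mulVec_eigenvectorBasis k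
    exact this
  rw [step1, step2, dotProduct_smul]
  have horth := hG.1.eigenvectorBasis.orthonormal
  rw [orthonormal_iff_ite] at horth
  have hdot : u j ⬝ᵥ u k = if j = k then 1 else 0 := by
    have := horth j k
    simpa [PiLp.inner_apply, RCLike.inner_apply, dotProduct, hu, mul_comm] using this
  rw [hdot]
  split_ifs <;> simp

private lemma XmulVec_eq_zero {m d : ℕ} (X : Matrix (Fin m) (Fin d) ℝ) (j : Fin d)
    (hj : (psd_tX_X X).1.eigenvalues j = 0) :
    X *ᵥ (WithLp.equiv 2 (Fin d → ℝ) ((psd_tX_X X).1.eigenvectorBasis j)) = 0 := by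
  have h := dot_XmulVec X j j
  rw [if_pos rfl, hj] at h
  exact dotProduct_self_eq_zero.mp h

/-- matrix whose columns are an orthonormal basis is orthogonal -/
private lemma basisMatrix_isOrth {d : ℕ}
    (b : OrthonormalBasis (Fin d) ℝ (EuclideanSpace ℝ (Fin d))) :
    IsOrth (Matrix.of fun i j => WithLp.equiv 2 (Fin d → ℝ) (b j) i) := by
  set U : Matrix (Fin d) (Fin d) ℝ := Matrix.of fun i j => WithLp.equiv 2 (Fin d → ℝ) (b j) i
  have horth := b.orthonormal
  rw [orthonormal_iff_ite] at horth
  have h : Uᵀ * U = 1 := by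
    ext j k
    have := horth j k
    simp only [PiLp.inner_apply, RCLike.inner_apply, starRingEnd_apply, star_trivial] at this
    simp only [Matrix.mul_apply, Matrix.transpose_apply, Matrix.one_apply, U, Matrix.of_apply]
    rw [← this]
    exact Finset.sum_congr rfl fun x _ => by rw [mul_comm]; rfl
  exact ⟨mul_eq_one_comm.mp h, h⟩


private lemma trace_transfer {m d : ℕ} (X : Matrix (Fin m) (Fin d) ℝ) :
    (sqrtPSD (X * Xᵀ)).trace = (sqrtPSD (Xᵀ * X)).trace := by
  have hG := psd_tX_X X
  set lam : Fin d → ℝ := hG.1.eigenvalues with hlam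
  set u : Fin d → Fin d → ℝ := fun j => WithLp.equiv 2 (Fin d → ℝ) (hG.1.eigenvectorBasis j)
    with hu
  set U : Matrix (Fin d) (Fin d) ℝ := Matrix.of fun i j => u j i with hU
  have hUorth : IsOrth U := basisMatrix_isOrth hG.1.eigenvectorBasis
  set Y : Matrix (Fin m) (Fin d) ℝ := X * U with hY
  have hYapp : ∀ i j, Y i j = (X *ᵥ u j) i := by
    intro i j
    simp [hY, Matrix.mul_apply, Matrix.mulVec, dotProduct, hU]
  have hYtY : Yᵀ * Y = Matrix.diagonal lam := by
    ext j k
    have hd := dot_XmulVec X j k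
    simp only [Matrix.mul_apply, Matrix.transpose_apply, Matrix.diagonal_apply]
    calc ∑ i, Y i j * Y i k = (X *ᵥ u j) ⬝ᵥ (X *ᵥ u k) := by
          simp [dotProduct, hYapp]
      _ = if j = k then lam k else 0 := hd
      _ = _ := by split_ifs with h <;> simp [h]
  have hYY : Y * Yᵀ = X * Xᵀ := by
    rw [hY, Matrix.transpose_mul, Matrix.mul_assoc, ← Matrix.mul_assoc U, hUorth.1,
      Matrix.one_mul]
  set f : Fin d → ℝ := fun j => (Real.sqrt (lam j))⁻¹ with hf
  set H : Matrix (Fin m) (Fin m) ℝ := Y * Matrix.diagonal f * Yᵀ with hH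
  have hHpsd : H.PosSemidef := by
    have hdiag : (Matrix.diagonal f).PosSemidef :=
      Matrix.posSemidef_diagonal_iff.mpr fun i => by positivity
    have := hdiag.mul_mul_conjTranspose_same Y
    rwa [conjT_real] at this
  have hYcolzero : ∀ j, lam j = 0 → ∀ i, Y i j = 0 := by
    intro j hj i
    rw [hYapp]
    rw [XmulVec_eq_zero X j hj]
    rfl
  have hH2 : H ^ 2 = X * Xᵀ := by
    rw [sq, hH]
    calc Y * Matrix.diagonal f * Yᵀ * (Y * Matrix.diagonal f * Yᵀ)
        = Y * (Matrix.diagonal f * (Yᵀ * Y) * Matrix.diagonal f) * Yᵀ := by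
          simp only [Matrix.mul_assoc]
      _ = Y * Matrix.diagonal (fun j => f j * lam j * f j) * Yᵀ := by
          rw [hYtY, Matrix.diagonal_mul_diagonal, Matrix.diagonal_mul_diagonal]
      _ = Y * Yᵀ := by
          ext i k
          rw [Matrix.mul_assoc, Matrix.mul_apply, Matrix.mul_apply]
          refine Finset.sum_congr rfl fun j _ => ?_
          rcases eq_or_ne (lam j) 0 with h0 | h0
          · simp [hYcolzero j h0 i]
          · have hpos : 0 < lam j := lt_of_le_of_ne (hG.eigenvalues_nonneg j) (Ne.symm h0)
            have hs : Real.sqrt (lam j) ≠ 0 := by positivity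
            have hgj : f j * lam j * f j = 1 := by
              rw [hf, ← Real.mul_self_sqrt hpos.le]
              field_simp
            rw [Matrix.diagonal_mul, hgj, one_mul]
      _ = X * Xᵀ := hYY
  have hHsqrt : H = CFC.sqrt (X * Xᵀ) := by rw [← hH2, CFC.sqrt_sq H hHpsd.nonneg]
  rw [sqrtPSD_of_psd (psd_X_tX X), ← hHsqrt, trace_sqrtPSD_eq_sum hG]
  calc (Y * Matrix.diagonal f * Yᵀ).trace = (Yᵀ * Y * Matrix.diagonal f).trace := by
        exact Matrix.trace_mul_cycle Y (Matrix.diagonal f) Yᵀ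
    _ = (Matrix.diagonal (fun j => lam j * f j)).trace := by
        rw [hYtY, Matrix.diagonal_mul_diagonal]
    _ = ∑ j, Real.sqrt (lam j) := by
        rw [Matrix.trace_diagonal]
        refine Finset.sum_congr rfl fun j _ => ?_
        rcases eq_or_ne (lam j) 0 with h0 | h0
        · simp [h0, hf]
        · have hpos : 0 < lam j := lt_of_le_of_ne (hG.eigenvalues_nonneg j) (Ne.symm h0)
          have hs : Real.sqrt (lam j) ≠ 0 := by positivity
          rw [hf]
          field_simp
          exact (Real.sq_sqrt hpos.le).symm

private lemma procrustes_key {d : ℕ} (M : Matrix (Fin d) (Fin d) ℝ) :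
    IsGreatest {y : ℝ | ∃ O : Matrix (Fin d) (Fin d) ℝ, IsOrth O ∧ y = (Oᵀ * M).trace}
      ((sqrtPSD (Mᵀ * M)).trace) := by
  classical
  have hG := psd_tX_X M
  set lam : Fin d → ℝ := hG.1.eigenvalues with hlam
  set u : Fin d → Fin d → ℝ := fun j => WithLp.equiv 2 (Fin d → ℝ) (hG.1.eigenvectorBasis j)
    with hu
  set U : Matrix (Fin d) (Fin d) ℝ := Matrix.of fun i j => u j i with hU
  have hUorth : IsOrth U := basisMatrix_isOrth hG.1.eigenvectorBasis
  have hdotu : ∀ j k, u j ⬝ᵥ u k = if j = k then 1 else 0 := by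
    intro j k
    have h := congrFun (congrFun hUorth.2 j) k
    simpa [Matrix.mul_apply, Matrix.transpose_apply, dotProduct, Matrix.one_apply,
      hU] using h
  have hz : ∀ j k, (M *ᵥ u j) ⬝ᵥ (M *ᵥ u k) = if j = k then lam k else 0 := dot_XmulVec M
  have htr : (sqrtPSD (Mᵀ * M)).trace = ∑ j, Real.sqrt (lam j) := trace_sqrtPSD_eq_sum hG
  constructor
  · -- membership
    set s : Set (Fin d) := {j | lam j ≠ 0} with hs
    set v : Fin d → EuclideanSpace ℝ (Fin d) :=
      fun j => (Real.sqrt (lam j))⁻¹ • (WithLp.equiv 2 (Fin d → ℝ)).symm (M *ᵥ u j) with hv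
    have horthv : Orthonormal ℝ (s.restrict v) := by
      rw [orthonormal_iff_ite]
      rintro ⟨j, hj⟩ ⟨k, hk⟩
      have hinner : (inner ℝ (v j) (v k) : ℝ)
          = (Real.sqrt (lam j))⁻¹ * ((Real.sqrt (lam k))⁻¹ * ((M *ᵥ u j) ⬝ᵥ (M *ᵥ u k))) := by
        simp [hv, real_inner_smul_left, real_inner_smul_right, PiLp.inner_apply,
          RCLike.inner_apply, dotProduct]
        rw [Finset.mul_sum, Finset.mul_sum]
        exact Finset.sum_congr rfl fun x _ => by ring
      simp only [Set.restrict_apply, Subtype.mk_eq_mk]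
      change inner ℝ (v j) (v k) = if j = k then 1 else 0
      rw [hinner, hz j k]
      by_cases hjk : j = k
      · subst hjk
        simp only [if_pos rfl]
        have hj' : lam j ≠ 0 := hj
        have hpos : 0 < lam j := lt_of_le_of_ne (hG.eigenvalues_nonneg j) (Ne.symm hj')
        have hsne : Real.sqrt (lam j) ≠ 0 := by positivity
        rw [← Real.mul_self_sqrt hpos.le]
        field_simp
        simp [Real.sqrt_sq (Real.sqrt_nonneg _)]
      · simp [hjk]
    obtain ⟨b, hb⟩ := horthv.exists_orthonormalBasis_extension_of_card_eq
      (by simp [finrank_euclideanSpace])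
    set Bm : Matrix (Fin d) (Fin d) ℝ := Matrix.of fun i j => WithLp.equiv 2 (Fin d → ℝ) (b j) i
      with hBm
    have hBorth : IsOrth Bm := basisMatrix_isOrth b
    refine ⟨Bm * Uᵀ, hBorth.mul hUorth.transpose, ?_⟩
    have h1 : (Bm * Uᵀ)ᵀ * M = U * (Bmᵀ * M) := by
      rw [Matrix.transpose_mul, Matrix.transpose_transpose, Matrix.mul_assoc]
    rw [htr, h1, Matrix.trace_mul_comm]
    have h2 : ((Bmᵀ * M) * U).trace
        = ∑ j, (WithLp.equiv 2 (Fin d → ℝ) (b j)) ⬝ᵥ (M *ᵥ u j) := by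
      unfold Matrix.trace
      refine Finset.sum_congr rfl fun j _ => ?_
      simp only [Matrix.diag_apply, Matrix.mul_apply, Matrix.transpose_apply,
        dotProduct, Matrix.mulVec, Matrix.of_apply, hBm, hU, Finset.sum_mul,
        Finset.mul_sum]
      rw [Finset.sum_comm]
      exact Finset.sum_congr rfl fun x _ => Finset.sum_congr rfl fun y _ => by ring
    rw [h2]
    refine Finset.sum_congr rfl fun j _ => ?_
    by_cases hj : lam j = 0
    · rw [XmulVec_eq_zero M j hj]
      simp [hj]
    · have hbj : b j = v j := hb j hj
      have heq : WithLp.equiv 2 (Fin d → ℝ) (b j) = (Real.sqrt (lam j))⁻¹ • (M *ᵥ u j) := by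
        rw [hbj, hv]
        rfl
      rw [heq, smul_dotProduct, hz j j, if_pos rfl]
      have hpos : 0 < lam j := lt_of_le_of_ne (hG.eigenvalues_nonneg j) (Ne.symm hj)
      have hsne : Real.sqrt (lam j) ≠ 0 := by positivity
      rw [smul_eq_mul, ← Real.mul_self_sqrt hpos.le]
      field_simp
      rw [Real.sqrt_sq (Real.sqrt_nonneg _)]
  · -- upper bound
    rintro y ⟨O, hO, rfl⟩
    have key : (Oᵀ * M).trace = ∑ j, (O *ᵥ u j) ⬝ᵥ (M *ᵥ u j) := by
      have h1 : (Uᵀ * (Oᵀ * M) * U).trace = (Oᵀ * M).trace := by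
        rw [Matrix.trace_mul_cycle, ← Matrix.mul_assoc, hUorth.1, Matrix.one_mul]
      rw [← h1]
      unfold Matrix.trace
      refine Finset.sum_congr rfl fun j _ => ?_
      have hcol : ∀ i, (Oᵀ * M * U) i j = (Oᵀ *ᵥ (M *ᵥ u j)) i := by
        intro i
        rw [Matrix.mulVec_mulVec]
        simp [Matrix.mul_apply, Matrix.mulVec, dotProduct, hU]
      have hentry : (Uᵀ * (Oᵀ * M) * U) j j = u j ⬝ᵥ (Oᵀ *ᵥ (M *ᵥ u j)) := by
        rw [Matrix.mul_assoc, Matrix.mul_apply]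
        simp only [Matrix.transpose_apply, hU, Matrix.of_apply, dotProduct]
        refine Finset.sum_congr rfl fun i _ => ?_
        rw [hcol i]
      rw [Matrix.diag_apply, hentry]
      rw [dotProduct_mulVec, Matrix.vecMul_transpose]
    rw [key, htr]
    refine Finset.sum_le_sum fun j _ => ?_
    have hOu : (O *ᵥ u j) ⬝ᵥ (O *ᵥ u j) = 1 := by
      nth_rewrite 1 [← Matrix.vecMul_transpose]
      rw [dotProduct_mulVec, Matrix.vecMul_vecMul, hO.2, Matrix.vecMul_one,
        hdotu j j, if_pos rfl]
    calc (O *ᵥ u j) ⬝ᵥ (M *ᵥ u j)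
        ≤ Real.sqrt ((O *ᵥ u j) ⬝ᵥ (O *ᵥ u j)) * Real.sqrt ((M *ᵥ u j) ⬝ᵥ (M *ᵥ u j)) :=
          dot_le_sqrt _ _
      _ = Real.sqrt (lam j) := by rw [hOu, hz j j, if_pos rfl, Real.sqrt_one, one_mul]

/-- For `A, B ∈ ℝ^{m×d}`, the orthogonal Procrustes value equals the
squared Bures–Wasserstein distance of the covariance factors:
`min_{O ∈ O(d)} ‖A − BO‖_F² = d_BW(AAᵀ, BBᵀ)²`. -/
theorem stmt2 (m d : ℕ) (hm : 0 < m) (hd : 0 < d)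
    (A B : Matrix (Fin m) (Fin d) ℝ) :
    IsLeast {x : ℝ | ∃ O : Matrix (Fin d) (Fin d) ℝ, IsOrth O ∧ x = frobSq (A - B * O)}
      (dBW (A * Aᵀ) (B * Bᵀ) ^ 2) := by
  classical
  set M : Matrix (Fin d) (Fin d) ℝ := Bᵀ * A with hM
  have hkey := procrustes_key M
  set τ : ℝ := (sqrtPSD (Mᵀ * M)).trace with hτ
  set c : ℝ := (A * Aᵀ).trace + (B * Bᵀ).trace with hc
  have hexp : ∀ O : Matrix (Fin d) (Fin d) ℝ, IsOrth O →
      frobSq (A - B * O) = c - 2 * (Oᵀ * M).trace := by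
    intro O hO
    unfold frobSq
    have e1 : (A - B * O)ᵀ * (A - B * O)
        = (Aᵀ * A - Aᵀ * (B * O)) - ((B * O)ᵀ * A - (B * O)ᵀ * (B * O)) := by
      rw [Matrix.transpose_sub, Matrix.sub_mul, Matrix.mul_sub, Matrix.mul_sub]
    rw [e1, Matrix.trace_sub, Matrix.trace_sub, Matrix.trace_sub]
    have p1 : (Aᵀ * A).trace = (A * Aᵀ).trace := Matrix.trace_mul_comm _ _
    have p3 : ((B * O)ᵀ * A).trace = (Oᵀ * M).trace := by
      rw [Matrix.transpose_mul, Matrix.mul_assoc, hM]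
    have p2 : (Aᵀ * (B * O)).trace = (Oᵀ * M).trace := by
      rw [← Matrix.trace_transpose (Aᵀ * (B * O)), Matrix.transpose_mul,
        Matrix.transpose_transpose, ← p3]
    have p4 : ((B * O)ᵀ * (B * O)).trace = (B * Bᵀ).trace := by
      rw [Matrix.trace_mul_comm, Matrix.transpose_mul, ← Matrix.mul_assoc,
        Matrix.mul_assoc B O Oᵀ, hO.1, Matrix.mul_one]
    rw [p1, p2, p3, p4, hc]
    ring
  have hpsdB := psd_X_tX B
  set S : Matrix (Fin m) (Fin m) ℝ := sqrtPSD (B * Bᵀ) with hS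
  have hSsq : S * S = B * Bᵀ := by
    rw [hS, sqrtPSD_of_psd hpsdB]; exact CFC.sqrt_mul_sqrt_self (B * Bᵀ) hpsdB.nonneg
  have hSsym : Sᵀ = S := by
    rw [hS, sqrtPSD_of_psd hpsdB, ← conjT_real]
    exact (CFC.sqrt_nonneg (B * Bᵀ)).posSemidef.1.eq
  have h1 : S * (A * Aᵀ) * S = (S * A) * (S * A)ᵀ := by
    rw [Matrix.transpose_mul, hSsym]
    simp only [Matrix.mul_assoc]
  have h2 : (S * A)ᵀ * (S * A) = Mᵀ * M := by
    rw [Matrix.transpose_mul, hSsym, hM, Matrix.transpose_mul, Matrix.transpose_transpose]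
    calc Aᵀ * S * (S * A) = Aᵀ * (S * S) * A := by simp only [Matrix.mul_assoc]
      _ = Aᵀ * B * (Bᵀ * A) := by rw [hSsq]; simp only [Matrix.mul_assoc]
  have hτ2 : (sqrtPSD (S * (A * Aᵀ) * S)).trace = τ := by
    rw [h1, trace_transfer (S * A), h2]
  have harg : dBW (A * Aᵀ) (B * Bᵀ) ^ 2 = c - 2 * τ := by
    obtain ⟨W, hW, hWτ⟩ := hkey.1
    have hnn : 0 ≤ c - 2 * τ := by
      have := frobSq_nonneg (A - B * W)
      rw [hexp W hW] at this
      rw [hWτ]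
      linarith
    unfold dBW
    rw [← hS, hτ2, ← hc]
    exact Real.sq_sqrt hnn
  constructor
  · obtain ⟨W, hW, hWτ⟩ := hkey.1
    exact ⟨W, hW, by rw [harg, hexp W hW, ← hWτ]⟩
  · rintro x ⟨O, hO, rfl⟩
    rw [harg, hexp O hO]
    have := hkey.2 ⟨O, hO, rfl⟩
    linarith
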